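/- Fix an integer r ≥ 2. Let I be an instance of (3,B2)-SAT with variables x₁,…,xₙ and clauses c₁,…,c_m. For 1 ≤ k < r, let B_k(v) denote the tree of depth 2 with root v, in which v has k children and each child has r children (leaves), and let F_{B_k(v)} be a set of k of its edges containing, for each child w of v, exactly one edge joining w to one of its leaf children. Build the finite simple graph G = (V,E) with permitted edge set U ⊆ E as follows. For each clause c, attach a block B_{r−2}(c) rooted at a vertex c, with forbidden edges F_{B_{r−2}(c)}. For each variable x, take four special vertices x, x', ¬x, ¬x', give each of x and ¬x its own r−2 pendant neighbours, join both x' and ¬x' to r common vertices v_x¹,…,v_xʳ, add the forbidden edges xx' and ¬x¬x', and attach to each v_xⁱ a block B_{r−1}(v_xⁱ) rooted at v_xⁱ with forbidden edges F_{B_{r−1}(v_xⁱ)}. Add a permitted crossing edge xc whenever x occurs positively in clause c, and ¬xc whenever x occurs negatively in c. Let U be the set of all edges of G that are not forbidden. Then I is satisfiable if and only if G has a maximal r-DCPS set S with S ⊆ U. -/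

import Mathlib

/-!
Let `U` be the set of permitted edges. In `U` every vertex has at most `r` edges, except the
clause vertices `c` and the vertices `v_x^t`, which have `r + 1`.

Given a satisfying assignment and a true literal chosen in each clause, delete from `U` the edge
from each clause to its chosen literal and, for each variable `x`, the `r` edges from the `v_x^t`
to the primed vertex of the false literal of `x`. Every vertex is left with at most `r` edges,
and every missing edge has a saturated endpoint (one that already has `r` edges): the clause
vertex, `v_x^t`, a child of a block, the primed vertex of a true literal, or the vertex of a
false literal, which keeps all its clause edges because no clause chose it.

Conversely, let `S ⊆ U` be a maximal set. A forbidden leaf edge can only be blocked at its child,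
so every child of a block is saturated and all root edges of the blocks lie in `S`. The
forbidden edge `x x'` saturates `x` or `x'`; as `v_x^t` has room for only one of its edges to
`x'` and `¬x'`, one of `x` and `¬x` is saturated and then carries all its clause edges. A clause
vertex keeps at most two of its three literal edges; the missing one leads to an unsaturated
literal vertex, so making `x` true exactly when the vertex `x` is unsaturated satisfies every
clause.
-/

/-- Vertices of the graph built from a (3,B2)-SAT instance for Ext r-DCPS.
For each clause `c`: the root `cl c` of a block `B_{r−2}(c)` with children
`clChild c a` (`a : Fin (r−2)`) and leaves `clLeaf c a t` (`t : Fin r`).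
For each variable `x`: the four special vertices `x, x', ¬x, ¬x'`, the pendant
neighbours `xPend x a`, `nxPend x a` (`a : Fin (r−2)`), the `r` common vertices
`vx x t` (`t : Fin r`), and for each `vx x t` a block `B_{r−1}(vx x t)` with children
`bChild x t a` (`a : Fin (r−1)`) and leaves `bLeaf x t a u` (`u : Fin r`). -/
inductive V15 (n m r : ℕ) : Type
  | cl : Fin m → V15 n m r
  | clChild : Fin m → Fin (r - 2) → V15 n m r
  | clLeaf : Fin m → Fin (r - 2) → Fin r → V15 n m r
  | x : Fin n → V15 n m r
  | x' : Fin n → V15 n m r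
  | nx : Fin n → V15 n m r
  | nx' : Fin n → V15 n m r
  | xPend : Fin n → Fin (r - 2) → V15 n m r
  | nxPend : Fin n → Fin (r - 2) → V15 n m r
  | vx : Fin n → Fin r → V15 n m r
  | bChild : Fin n → Fin r → Fin (r - 1) → V15 n m r
  | bLeaf : Fin n → Fin r → Fin (r - 1) → Fin r → V15 n m r

/-- All edges of the constructed graph (permitted and forbidden),
including the crossing edges `x c` / `¬x c` for positive / negative occurrences. -/
def E15 (n m r : ℕ) (lit : Fin m → Fin 3 → Fin n × Bool) :
    Set (Sym2 (V15 n m r)) :=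
  {e | (∃ (j : Fin m) (a : Fin (r - 2)), e = s(V15.cl j, V15.clChild j a)) ∨
       (∃ (j : Fin m) (a : Fin (r - 2)) (t : Fin r),
          e = s(V15.clChild j a, V15.clLeaf j a t)) ∨
       (∃ (i : Fin n) (a : Fin (r - 2)),
          e = s(V15.x i, V15.xPend i a) ∨ e = s(V15.nx i, V15.nxPend i a)) ∨
       (∃ (i : Fin n) (t : Fin r),
          e = s(V15.x' i, V15.vx i t) ∨ e = s(V15.nx' i, V15.vx i t)) ∨
       (∃ i : Fin n, e = s(V15.x i, V15.x' i) ∨ e = s(V15.nx i, V15.nx' i)) ∨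
       (∃ (i : Fin n) (t : Fin r) (a : Fin (r - 1)),
          e = s(V15.vx i t, V15.bChild i t a)) ∨
       (∃ (i : Fin n) (t : Fin r) (a : Fin (r - 1)) (u : Fin r),
          e = s(V15.bChild i t a, V15.bLeaf i t a u)) ∨
       (∃ (i : Fin n) (j : Fin m) (k : Fin 3),
          lit j k = (i, true) ∧ e = s(V15.x i, V15.cl j)) ∨
       (∃ (i : Fin n) (j : Fin m) (k : Fin 3),
          lit j k = (i, false) ∧ e = s(V15.nx i, V15.cl j))}

/-- The forbidden edges: for each block, for each child, exactly one edge to a leaf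
(selected by the choice functions `fC`, `fB`), together with the edges `xx'`, `¬x¬x'`. -/
def Forb15 (n m r : ℕ) (fC : Fin m → Fin (r - 2) → Fin r)
    (fB : Fin n → Fin r → Fin (r - 1) → Fin r) : Set (Sym2 (V15 n m r)) :=
  {e | (∃ (j : Fin m) (a : Fin (r - 2)),
          e = s(V15.clChild j a, V15.clLeaf j a (fC j a))) ∨
       (∃ i : Fin n, e = s(V15.x i, V15.x' i) ∨ e = s(V15.nx i, V15.nx' i)) ∨
       (∃ (i : Fin n) (t : Fin r) (a : Fin (r - 1)),
          e = s(V15.bChild i t a, V15.bLeaf i t a (fB i t a)))}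

section DCPS

variable {α : Type*}

def edgesAt (S : Set (Sym2 α)) (v : α) : Set (Sym2 α) := {e ∈ S | v ∈ e}

def IsDCPS (r : ℕ) (S : Set (Sym2 α)) : Prop := ∀ v, (edgesAt S v).ncard ≤ r

def IsMaximalDCPS (r : ℕ) (E S : Set (Sym2 α)) : Prop :=
  IsDCPS r S ∧ ∀ e ∈ E \ S, ¬ IsDCPS r (insert e S)

variable {r : ℕ} {E S U R : Set (Sym2 α)} {e : Sym2 α} {v : α}

lemma edgesAt_mono (h : S ⊆ U) : edgesAt S v ⊆ edgesAt U v := fun _ he => ⟨h he.1, he.2⟩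

lemma edgesAt_sdiff : edgesAt (S \ R) v = edgesAt S v \ edgesAt R v := by
  ext f
  simp only [edgesAt, Set.mem_sdiff, Set.mem_ofPred_eq]
  tauto

lemma edgesAt_insert_of_mem (hv : v ∈ e) : edgesAt (insert e S) v = insert e (edgesAt S v) := by
  ext f
  simp only [edgesAt, Set.mem_insert_iff, Set.mem_ofPred_eq]
  constructor
  · rintro ⟨rfl | hf, hvf⟩
    exacts [.inl rfl, .inr ⟨hf, hvf⟩]
  · rintro (rfl | ⟨hf, hvf⟩)
    exacts [⟨.inl rfl, hv⟩, ⟨.inr hf, hvf⟩]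

lemma edgesAt_insert_of_notMem (hv : v ∉ e) : edgesAt (insert e S) v = edgesAt S v := by
  ext f
  simp only [edgesAt, Set.mem_insert_iff, Set.mem_ofPred_eq]
  constructor
  · rintro ⟨rfl | hf, hvf⟩
    exacts [absurd hvf hv, ⟨hf, hvf⟩]
  · exact fun ⟨hf, hvf⟩ => ⟨.inr hf, hvf⟩

lemma IsDCPS.exists_ncard_edgesAt_eq (hS : IsDCPS r S) (h : ¬ IsDCPS r (insert e S)) :
    ∃ v ∈ e, (edgesAt S v).ncard = r := by
  obtain ⟨v, hv⟩ : ∃ v, r < (edgesAt (insert e S) v).ncard := by simpa [IsDCPS] using h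
  by_cases hve : v ∈ e
  · rw [edgesAt_insert_of_mem hve] at hv
    have := Set.ncard_insert_le e (edgesAt S v)
    exact ⟨v, hve, le_antisymm (hS v) (by omega)⟩
  · rw [edgesAt_insert_of_notMem hve] at hv
    exact absurd (hS v) hv.not_ge

lemma IsMaximalDCPS.exists_ncard_edgesAt_eq (hS : IsMaximalDCPS r E S) (he : e ∈ E) (heS : e ∉ S) :
    ∃ v ∈ e, (edgesAt S v).ncard = r :=
  hS.1.exists_ncard_edgesAt_eq (hS.2 e ⟨he, heS⟩)

lemma not_isDCPS_insert (hv : v ∈ e) (he : e ∉ S) (hr : r ≤ (edgesAt S v).ncard)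
    (hfin : (edgesAt S v).Finite := by toFinite_tac) : ¬ IsDCPS r (insert e S) := fun h => by
  have := h v
  rw [edgesAt_insert_of_mem hv, Set.ncard_insert_of_notMem (fun h' => he h'.1) hfin] at this
  omega

lemma mem_of_ncard_edgesAt_le (hSU : S ⊆ U) (hcard : (edgesAt U v).ncard ≤ (edgesAt S v).ncard)
    (he : e ∈ edgesAt U v) (hfin : (edgesAt U v).Finite := by toFinite_tac) : e ∈ S := by
  rw [← Set.eq_of_subset_of_ncard_le (edgesAt_mono hSU) hcard hfin] at he
  exact he.1

end DCPS

namespace V15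

variable {n m r : ℕ}

def enum : (Fin m ⊕ Fin m × Fin (r - 2) ⊕ Fin m × Fin (r - 2) × Fin r) ⊕
    (Fin n × Fin 4 ⊕ Fin n × Bool × Fin (r - 2) ⊕ Fin n × Fin r ⊕ Fin n × Fin r × Fin (r - 1) ⊕
      Fin n × Fin r × Fin (r - 1) × Fin r) → V15 n m r
  | .inl (.inl j) => cl j
  | .inl (.inr (.inl (j, a))) => clChild j a
  | .inl (.inr (.inr (j, a, t))) => clLeaf j a t
  | .inr (.inl (i, 0)) => x i
  | .inr (.inl (i, 1)) => x' i
  | .inr (.inl (i, 2)) => nx i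
  | .inr (.inl (i, 3)) => nx' i
  | .inr (.inr (.inl (i, true, a))) => xPend i a
  | .inr (.inr (.inl (i, false, a))) => nxPend i a
  | .inr (.inr (.inr (.inl (i, t)))) => vx i t
  | .inr (.inr (.inr (.inr (.inl (i, t, a))))) => bChild i t a
  | .inr (.inr (.inr (.inr (.inr (i, t, a, u))))) => bLeaf i t a u

lemma enum_surjective : Function.Surjective (enum : _ → V15 n m r) := by
  intro v
  cases v
  all_goals first
    | exact ⟨.inl (.inl _), rfl⟩ | exact ⟨.inl (.inr (.inl (_, _))), rfl⟩
    | exact ⟨.inl (.inr (.inr (_, _, _))), rfl⟩ | exact ⟨.inr (.inl (_, 0)), rfl⟩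
    | exact ⟨.inr (.inl (_, 1)), rfl⟩ | exact ⟨.inr (.inl (_, 2)), rfl⟩
    | exact ⟨.inr (.inl (_, 3)), rfl⟩ | exact ⟨.inr (.inr (.inl (_, true, _))), rfl⟩
    | exact ⟨.inr (.inr (.inl (_, false, _))), rfl⟩
    | exact ⟨.inr (.inr (.inr (.inl (_, _)))), rfl⟩
    | exact ⟨.inr (.inr (.inr (.inr (.inl (_, _, _))))), rfl⟩
    | exact ⟨.inr (.inr (.inr (.inr (.inr (_, _, _, _))))), rfl⟩

instance : Finite (V15 n m r) := Finite.of_surjective enum enum_surjective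

def litVertex : Fin n × Bool → V15 n m r
  | (i, true) => x i
  | (i, false) => nx i

def primeVertex : Fin n × Bool → V15 n m r
  | (i, true) => x' i
  | (i, false) => nx' i

def pendant : Fin n × Bool → Fin (r - 2) → V15 n m r
  | (i, true) => xPend i
  | (i, false) => nxPend i

lemma litVertex_injective : Function.Injective (litVertex : _ → V15 n m r) := by
  rintro ⟨i, _ | _⟩ ⟨i', _ | _⟩ h <;> simp_all [litVertex]

variable (lit : Fin m → Fin 3 → Fin n × Bool) (fC : Fin m → Fin (r - 2) → Fin r)
  (fB : Fin n → Fin r → Fin (r - 1) → Fin r)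

def permitted : Set (Sym2 (V15 n m r)) := E15 n m r lit \ Forb15 n m r fC fB

lemma edgesAt_permitted_cl (j : Fin m) :
    edgesAt (permitted lit fC fB) (cl j) =
      Set.range (Sum.elim (fun a => s(cl j, clChild j a))
        fun k => s(litVertex (lit j k), cl j)) := by
  apply Set.Subset.antisymm
  · rintro e ⟨⟨he, -⟩, hv⟩
    rcases he with ⟨_, a, rfl⟩ | ⟨_, _, _, rfl⟩ | ⟨_, _, rfl | rfl⟩ | ⟨_, _, rfl | rfl⟩ |
      ⟨_, rfl | rfl⟩ | ⟨_, _, _, rfl⟩ | ⟨_, _, _, _, rfl⟩ | ⟨_, _, k, hl, rfl⟩ |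
      ⟨_, _, k, hl, rfl⟩ <;> simp at hv <;> subst hv
    · exact ⟨.inl a, rfl⟩
    · exact ⟨.inr k, by simp [hl, litVertex]⟩
    · exact ⟨.inr k, by simp [hl, litVertex]⟩
  · rintro _ ⟨a | k, rfl⟩
    · simp [edgesAt, permitted, E15, Forb15]
    · rcases hl : lit j k with ⟨i, _ | _⟩ <;>
        simp [edgesAt, permitted, E15, Forb15, litVertex, hl] <;> exact ⟨k, hl⟩

lemma edgesAt_permitted_clChild (j : Fin m) (a : Fin (r - 2)) :
    edgesAt (permitted lit fC fB) (clChild j a) =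
      Set.range (Sum.elim (fun _ : Unit => s(cl j, clChild j a))
        fun t : {t // t ≠ fC j a} => s(clChild j a, clLeaf j a t)) := by
  apply Set.Subset.antisymm
  · rintro e ⟨⟨he, hF⟩, hv⟩
    rcases he with ⟨_, _, rfl⟩ | ⟨_, _, t, rfl⟩ | ⟨_, _, rfl | rfl⟩ | ⟨_, _, rfl | rfl⟩ |
      ⟨_, rfl | rfl⟩ | ⟨_, _, _, rfl⟩ | ⟨_, _, _, _, rfl⟩ | ⟨_, _, _, _, rfl⟩ |
      ⟨_, _, _, _, rfl⟩ <;> simp at hv <;> obtain ⟨rfl, rfl⟩ := hv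
    · exact ⟨.inl (), rfl⟩
    · refine ⟨.inr ⟨t, ?_⟩, rfl⟩
      rintro rfl
      exact hF (.inl ⟨_, _, rfl⟩)
  · rintro _ ⟨_ | ⟨t, ht⟩, rfl⟩
    · simp [edgesAt, permitted, E15, Forb15]
    · simp [edgesAt, permitted, E15, Forb15, ht]

lemma edgesAt_permitted_clLeaf (j : Fin m) (a : Fin (r - 2)) :
    edgesAt (permitted lit fC fB) (clLeaf j a (fC j a)) = ∅ := by
  refine Set.eq_empty_of_forall_notMem ?_
  rintro e ⟨⟨he, hF⟩, hv⟩
  rcases he with ⟨_, _, rfl⟩ | ⟨_, _, t, rfl⟩ | ⟨_, _, rfl | rfl⟩ | ⟨_, _, rfl | rfl⟩ |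
    ⟨_, rfl | rfl⟩ | ⟨_, _, _, rfl⟩ | ⟨_, _, _, _, rfl⟩ | ⟨_, _, _, _, rfl⟩ |
    ⟨_, _, _, _, rfl⟩ <;> simp at hv
  obtain ⟨rfl, rfl, rfl⟩ := hv
  exact hF (.inl ⟨_, _, rfl⟩)

lemma edgesAt_permitted_litVertex (l : Fin n × Bool) :
    edgesAt (permitted lit fC fB) (litVertex l) =
      Set.range (Sum.elim (fun a => s(litVertex l, pendant l a))
        fun p : {p : Fin m × Fin 3 // lit p.1 p.2 = l} => s(litVertex l, cl p.1.1)) := by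
  apply Set.Subset.antisymm
  · rintro e ⟨⟨he, hF⟩, hv⟩
    obtain ⟨i, _ | _⟩ := l <;>
    rcases he with ⟨_, _, rfl⟩ | ⟨_, _, _, rfl⟩ | ⟨_, a, rfl | rfl⟩ | ⟨_, _, rfl | rfl⟩ |
      ⟨_, rfl | rfl⟩ | ⟨_, _, _, rfl⟩ | ⟨_, _, _, _, rfl⟩ | ⟨_, j, k, hl, rfl⟩ |
      ⟨_, j, k, hl, rfl⟩ <;> simp [litVertex] at hv <;> subst hv
    all_goals first
      | exact ⟨.inl a, rfl⟩
      | exact ⟨.inr ⟨(j, k), hl⟩, rfl⟩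
      | exact absurd (.inr (.inl ⟨i, by simp⟩)) hF
  · obtain ⟨i, _ | _⟩ := l <;> rintro _ ⟨a | ⟨⟨j, k⟩, hl⟩, rfl⟩ <;>
      simp [edgesAt, permitted, E15, Forb15, litVertex, pendant] <;> exact ⟨k, hl⟩

lemma edgesAt_permitted_primeVertex (l : Fin n × Bool) :
    edgesAt (permitted lit fC fB) (primeVertex l) =
      Set.range fun t => s(primeVertex l, vx l.1 t) := by
  apply Set.Subset.antisymm
  · rintro e ⟨⟨he, hF⟩, hv⟩
    obtain ⟨i, _ | _⟩ := l <;>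
    rcases he with ⟨_, _, rfl⟩ | ⟨_, _, _, rfl⟩ | ⟨_, a, rfl | rfl⟩ | ⟨_, t, rfl | rfl⟩ |
      ⟨_, rfl | rfl⟩ | ⟨_, _, _, rfl⟩ | ⟨_, _, _, _, rfl⟩ | ⟨_, j, k, hl, rfl⟩ |
      ⟨_, j, k, hl, rfl⟩ <;> simp [primeVertex] at hv <;> subst hv
    all_goals first
      | exact ⟨t, rfl⟩
      | exact absurd (.inr (.inl ⟨i, by simp⟩)) hF
  · obtain ⟨i, _ | _⟩ := l <;> rintro _ ⟨t, rfl⟩ <;>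
      simp [edgesAt, permitted, E15, Forb15, primeVertex]

lemma edgesAt_permitted_vx (i : Fin n) (t : Fin r) :
    edgesAt (permitted lit fC fB) (vx i t) =
      Set.range (Sum.elim (fun b => s(primeVertex (i, b), vx i t))
        fun a => s(vx i t, bChild i t a)) := by
  apply Set.Subset.antisymm
  · rintro e ⟨⟨he, -⟩, hv⟩
    rcases he with ⟨_, _, rfl⟩ | ⟨_, _, _, rfl⟩ | ⟨_, _, rfl | rfl⟩ | ⟨_, _, rfl | rfl⟩ |
      ⟨_, rfl | rfl⟩ | ⟨_, _, a, rfl⟩ | ⟨_, _, _, _, rfl⟩ | ⟨_, _, _, _, rfl⟩ |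
      ⟨_, _, _, _, rfl⟩ <;> simp at hv <;> obtain ⟨rfl, rfl⟩ := hv
    · exact ⟨.inl true, rfl⟩
    · exact ⟨.inl false, rfl⟩
    · exact ⟨.inr a, rfl⟩
  · rintro _ ⟨(_ | _) | a, rfl⟩ <;> simp [edgesAt, permitted, E15, Forb15, primeVertex]

lemma edgesAt_permitted_bChild (i : Fin n) (t : Fin r) (a : Fin (r - 1)) :
    edgesAt (permitted lit fC fB) (bChild i t a) =
      Set.range (Sum.elim (fun _ : Unit => s(vx i t, bChild i t a))
        fun u : {u // u ≠ fB i t a} => s(bChild i t a, bLeaf i t a u)) := by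
  apply Set.Subset.antisymm
  · rintro e ⟨⟨he, hF⟩, hv⟩
    rcases he with ⟨_, _, rfl⟩ | ⟨_, _, _, rfl⟩ | ⟨_, _, rfl | rfl⟩ | ⟨_, _, rfl | rfl⟩ |
      ⟨_, rfl | rfl⟩ | ⟨_, _, _, rfl⟩ | ⟨_, _, _, u, rfl⟩ | ⟨_, _, _, _, rfl⟩ |
      ⟨_, _, _, _, rfl⟩ <;> simp at hv <;> obtain ⟨rfl, rfl, rfl⟩ := hv
    · exact ⟨.inl (), rfl⟩
    · refine ⟨.inr ⟨u, ?_⟩, rfl⟩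
      rintro rfl
      exact hF (.inr (.inr ⟨_, _, _, rfl⟩))
  · rintro _ ⟨_ | ⟨u, hu⟩, rfl⟩
    · simp [edgesAt, permitted, E15, Forb15]
    · simp [edgesAt, permitted, E15, Forb15, hu]

lemma edgesAt_permitted_bLeaf (i : Fin n) (t : Fin r) (a : Fin (r - 1)) :
    edgesAt (permitted lit fC fB) (bLeaf i t a (fB i t a)) = ∅ := by
  refine Set.eq_empty_of_forall_notMem ?_
  rintro e ⟨⟨he, hF⟩, hv⟩
  rcases he with ⟨_, _, rfl⟩ | ⟨_, _, t, rfl⟩ | ⟨_, _, rfl | rfl⟩ | ⟨_, _, rfl | rfl⟩ |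
    ⟨_, rfl | rfl⟩ | ⟨_, _, _, rfl⟩ | ⟨_, _, _, _, rfl⟩ | ⟨_, _, _, _, rfl⟩ |
    ⟨_, _, _, _, rfl⟩ <;> simp at hv
  obtain ⟨rfl, rfl, rfl, rfl⟩ := hv
  exact hF (.inr (.inr ⟨_, _, _, rfl⟩))

lemma edgesAt_clLeaf_subset (j : Fin m) (a : Fin (r - 2)) (t : Fin r) :
    edgesAt (E15 n m r lit) (clLeaf j a t) ⊆ {s(clChild j a, clLeaf j a t)} := by
  rintro e ⟨he, hv⟩
  rcases he with ⟨_, _, rfl⟩ | ⟨_, _, t, rfl⟩ | ⟨_, _, rfl | rfl⟩ | ⟨_, _, rfl | rfl⟩ |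
    ⟨_, rfl | rfl⟩ | ⟨_, _, _, rfl⟩ | ⟨_, _, _, _, rfl⟩ | ⟨_, _, _, _, rfl⟩ |
    ⟨_, _, _, _, rfl⟩ <;> simp at hv
  obtain ⟨rfl, rfl, rfl⟩ := hv
  rfl

lemma edgesAt_pendant_subset (l : Fin n × Bool) (a : Fin (r - 2)) :
    edgesAt (E15 n m r lit) (pendant l a) ⊆ {s(litVertex l, pendant l a)} := by
  rintro e ⟨he, hv⟩
  obtain ⟨i, _ | _⟩ := l <;>
  rcases he with ⟨_, _, rfl⟩ | ⟨_, _, t, rfl⟩ | ⟨_, _, rfl | rfl⟩ | ⟨_, _, rfl | rfl⟩ |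
    ⟨_, rfl | rfl⟩ | ⟨_, _, _, rfl⟩ | ⟨_, _, _, _, rfl⟩ | ⟨_, _, _, _, rfl⟩ |
    ⟨_, _, _, _, rfl⟩ <;> simp [pendant] at hv <;> obtain ⟨rfl, rfl⟩ := hv <;> rfl

lemma edgesAt_bLeaf_subset (i : Fin n) (t : Fin r) (a : Fin (r - 1)) (u : Fin r) :
    edgesAt (E15 n m r lit) (bLeaf i t a u) ⊆ {s(bChild i t a, bLeaf i t a u)} := by
  rintro e ⟨he, hv⟩
  rcases he with ⟨_, _, rfl⟩ | ⟨_, _, t, rfl⟩ | ⟨_, _, rfl | rfl⟩ | ⟨_, _, rfl | rfl⟩ |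
    ⟨_, rfl | rfl⟩ | ⟨_, _, _, rfl⟩ | ⟨_, _, _, _, rfl⟩ | ⟨_, _, _, _, rfl⟩ |
    ⟨_, _, _, _, rfl⟩ <;> simp at hv
  obtain ⟨rfl, rfl, rfl, rfl⟩ := hv
  rfl

lemma ncard_edgesAt_permitted_cl (hr : 2 ≤ r)
    (hdist : ∀ j : Fin m, Function.Injective fun k : Fin 3 => (lit j k).1) (j : Fin m) :
    (edgesAt (permitted lit fC fB) (cl j)).ncard = r + 1 := by
  rw [edgesAt_permitted_cl, Set.ncard_range_of_injective]
  · simp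
    omega
  refine Function.Injective.sumElim (fun a b h => by simpa using h) (fun k k' h => ?_) ?_
  · refine hdist j (congrArg Prod.fst (litVertex_injective (m := m) (r := r) ?_))
    rcases Sym2.eq_iff.1 h with ⟨h, -⟩ | ⟨h, -⟩
    · exact h
    · generalize lit j k = l at h
      obtain ⟨i, _ | _⟩ := l <;> simp [litVertex] at h
  · intro a k
    generalize lit j k = l
    obtain ⟨i, _ | _⟩ := l <;> simp [litVertex]

lemma ncard_edgesAt_permitted_clChild (j : Fin m) (a : Fin (r - 2)) :
    (edgesAt (permitted lit fC fB) (clChild j a)).ncard = r := by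
  rw [edgesAt_permitted_clChild, Set.ncard_range_of_injective]
  · have := (fC j a).pos
    simp
    omega
  exact Function.Injective.sumElim (fun _ _ _ => rfl)
    (fun t u h => by simpa [Subtype.ext_iff] using h) (by simp)

lemma ncard_edgesAt_permitted_litVertex (hr : 2 ≤ r)
    (hdist : ∀ j : Fin m, Function.Injective fun k : Fin 3 => (lit j k).1) (l : Fin n × Bool)
    (hocc : (Finset.univ.filter fun p : Fin m × Fin 3 => lit p.1 p.2 = l).card = 2) :
    (edgesAt (permitted lit fC fB) (litVertex l)).ncard = r := by
  rw [edgesAt_permitted_litVertex, Set.ncard_range_of_injective]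
  · simp [Nat.card_eq_fintype_card, Fintype.card_subtype, hocc]
    omega
  refine Function.Injective.sumElim ?_ (fun ⟨p, hp⟩ ⟨q, hq⟩ h => ?_) ?_
  · obtain ⟨i, _ | _⟩ := l <;> intro a b h <;> simpa [litVertex, pendant] using h
  · have hj : p.1 = q.1 := by
      obtain ⟨i, _ | _⟩ := l <;> simpa [litVertex] using h
    obtain ⟨j, k⟩ := p
    obtain ⟨j', k'⟩ := q
    subst hj
    have := hdist j (show (lit j k).1 = (lit j k').1 by simp only at hp hq; rw [hp, hq])
    simp_all
  · obtain ⟨i, _ | _⟩ := l <;> simp [litVertex, pendant]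

lemma ncard_edgesAt_permitted_primeVertex (l : Fin n × Bool) :
    (edgesAt (permitted lit fC fB) (primeVertex l)).ncard = r := by
  rw [edgesAt_permitted_primeVertex, Set.ncard_range_of_injective]
  · simp
  obtain ⟨i, _ | _⟩ := l <;> intro t u h <;> simpa [primeVertex] using h

lemma ncard_edgesAt_permitted_vx (i : Fin n) (t : Fin r) :
    (edgesAt (permitted lit fC fB) (vx i t)).ncard = r + 1 := by
  rw [edgesAt_permitted_vx, Set.ncard_range_of_injective]
  · have := t.pos
    simp
    omega
  refine Function.Injective.sumElim ?_ (fun a b h => by simpa using h) ?_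
  · rintro (_ | _) (_ | _) h <;> simp_all [primeVertex]
  · rintro (_ | _) a <;> simp [primeVertex]

lemma ncard_edgesAt_permitted_bChild (i : Fin n) (t : Fin r) (a : Fin (r - 1)) :
    (edgesAt (permitted lit fC fB) (bChild i t a)).ncard = r := by
  rw [edgesAt_permitted_bChild, Set.ncard_range_of_injective]
  · have := (fB i t a).pos
    simp
    omega
  exact Function.Injective.sumElim (fun _ _ _ => rfl)
    (fun u v h => by simpa [Subtype.ext_iff] using h) (by simp)

section Forward

variable (T : Fin n → Bool) (K : Fin m → Fin 3)

def removedEdges : Set (Sym2 (V15 n m r)) :=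
  {e | (∃ j, e = s(litVertex (lit j (K j)), cl j)) ∨ ∃ i t, e = s(primeVertex (i, !T i), vx i t)}

def assignmentDCPS : Set (Sym2 (V15 n m r)) := permitted lit fC fB \ removedEdges lit T K

lemma edgesAt_removedEdges_cl (j : Fin m) :
    edgesAt (removedEdges (r := r) lit T K) (cl j) = {s(litVertex (lit j (K j)), cl j)} := by
  ext e
  constructor
  · rintro ⟨⟨j', rfl⟩ | ⟨i, t, rfl⟩, hv⟩
    · generalize hl : lit j' (K j') = l at hv
      obtain ⟨i, _ | _⟩ := l <;> simp_all [litVertex]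
    · cases hT : T i <;> simp [primeVertex, hT] at hv
  · rintro rfl
    exact ⟨.inl ⟨j, rfl⟩, Sym2.mem_mk_right _ _⟩

lemma edgesAt_removedEdges_vx (i : Fin n) (t : Fin r) :
    edgesAt (removedEdges (r := r) lit T K) (vx i t) = {s(primeVertex (i, !T i), vx i t)} := by
  ext e
  constructor
  · rintro ⟨⟨j, rfl⟩ | ⟨i', t', rfl⟩, hv⟩
    · generalize lit j (K j) = l at hv
      obtain ⟨i, _ | _⟩ := l <;> simp [litVertex] at hv
    · cases hT : T i' <;> simp [primeVertex, hT] at hv <;> obtain ⟨rfl, rfl⟩ := hv <;> simp [hT]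
  · rintro rfl
    exact ⟨.inr ⟨i, t, rfl⟩, Sym2.mem_mk_right _ _⟩

lemma edgesAt_removedEdges_clChild (j : Fin m) (a : Fin (r - 2)) :
    edgesAt (removedEdges (r := r) lit T K) (clChild j a) = ∅ := by
  refine Set.eq_empty_of_forall_notMem ?_
  rintro e ⟨⟨j', rfl⟩ | ⟨i, t, rfl⟩, hv⟩
  · generalize lit j' (K j') = l at hv
    obtain ⟨i, _ | _⟩ := l <;> simp [litVertex] at hv
  · cases hT : T i <;> simp [primeVertex, hT] at hv

lemma edgesAt_removedEdges_bChild (i : Fin n) (t : Fin r) (a : Fin (r - 1)) :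
    edgesAt (removedEdges (r := r) lit T K) (bChild i t a) = ∅ := by
  refine Set.eq_empty_of_forall_notMem ?_
  rintro e ⟨⟨j', rfl⟩ | ⟨i', t', rfl⟩, hv⟩
  · generalize lit j' (K j') = l at hv
    obtain ⟨i, _ | _⟩ := l <;> simp [litVertex] at hv
  · cases hT : T i' <;> simp [primeVertex, hT] at hv

lemma edgesAt_removedEdges_primeVertex {l : Fin n × Bool} (hl : T l.1 = l.2) :
    edgesAt (removedEdges (r := r) lit T K) (primeVertex l) = ∅ := by
  refine Set.eq_empty_of_forall_notMem ?_
  obtain ⟨i, b⟩ := l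
  rintro e ⟨⟨j', rfl⟩ | ⟨i', t', rfl⟩, hv⟩
  · generalize lit j' (K j') = l at hv
    obtain ⟨i, _ | _⟩ := l <;> cases b <;> simp [litVertex, primeVertex] at hv
  · cases b <;> cases hT : T i' <;> simp [primeVertex] at hv <;> simp_all

lemma edgesAt_removedEdges_litVertex (hK : ∀ j, T (lit j (K j)).1 = (lit j (K j)).2)
    {l : Fin n × Bool} (hl : T l.1 ≠ l.2) :
    edgesAt (removedEdges (r := r) lit T K) (litVertex l) = ∅ := by
  refine Set.eq_empty_of_forall_notMem ?_
  rintro e ⟨⟨j, rfl⟩ | ⟨i', t', rfl⟩, hv⟩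
  · have hj := hK j
    rcases Sym2.mem_iff.1 hv with h | h
    · rw [litVertex_injective h] at hl
      exact hl hj
    · obtain ⟨i, _ | _⟩ := l <;> simp [litVertex] at h
  · obtain ⟨i, _ | _⟩ := l <;> cases hT : T i' <;> simp [litVertex, primeVertex, hT] at hv

lemma ncard_edgesAt_assignmentDCPS_cl (hr : 2 ≤ r)
    (hdist : ∀ j : Fin m, Function.Injective fun k : Fin 3 => (lit j k).1) (j : Fin m) :
    (edgesAt (assignmentDCPS lit fC fB T K) (cl j)).ncard = r := by
  have hmem : s(litVertex (lit j (K j)), cl j) ∈ edgesAt (permitted lit fC fB) (cl j) := by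
    rw [edgesAt_permitted_cl]
    exact ⟨.inr (K j), rfl⟩
  rw [assignmentDCPS, edgesAt_sdiff, edgesAt_removedEdges_cl, Set.ncard_sdiff_singleton_of_mem hmem,
    ncard_edgesAt_permitted_cl lit fC fB hr hdist, Nat.add_sub_cancel]

lemma ncard_edgesAt_assignmentDCPS_vx (i : Fin n) (t : Fin r) :
    (edgesAt (assignmentDCPS lit fC fB T K) (vx i t)).ncard = r := by
  have hmem : s(primeVertex (i, !T i), vx i t) ∈ edgesAt (permitted lit fC fB) (vx i t) := by
    rw [edgesAt_permitted_vx]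
    exact ⟨.inl (!T i), rfl⟩
  rw [assignmentDCPS, edgesAt_sdiff, edgesAt_removedEdges_vx, Set.ncard_sdiff_singleton_of_mem hmem,
    ncard_edgesAt_permitted_vx, Nat.add_sub_cancel]

lemma ncard_edgesAt_assignmentDCPS_clChild (j : Fin m) (a : Fin (r - 2)) :
    (edgesAt (assignmentDCPS lit fC fB T K) (clChild j a)).ncard = r := by
  rw [assignmentDCPS, edgesAt_sdiff, edgesAt_removedEdges_clChild, Set.sdiff_empty,
    ncard_edgesAt_permitted_clChild]

lemma ncard_edgesAt_assignmentDCPS_bChild (i : Fin n) (t : Fin r) (a : Fin (r - 1)) :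
    (edgesAt (assignmentDCPS lit fC fB T K) (bChild i t a)).ncard = r := by
  rw [assignmentDCPS, edgesAt_sdiff, edgesAt_removedEdges_bChild, Set.sdiff_empty,
    ncard_edgesAt_permitted_bChild]

lemma ncard_edgesAt_assignmentDCPS_primeVertex {l : Fin n × Bool} (hl : T l.1 = l.2) :
    (edgesAt (assignmentDCPS lit fC fB T K) (primeVertex l)).ncard = r := by
  rw [assignmentDCPS, edgesAt_sdiff, edgesAt_removedEdges_primeVertex lit T K hl, Set.sdiff_empty,
    ncard_edgesAt_permitted_primeVertex]

lemma ncard_edgesAt_assignmentDCPS_litVertex (hr : 2 ≤ r)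
    (hdist : ∀ j : Fin m, Function.Injective fun k : Fin 3 => (lit j k).1)
    (hK : ∀ j, T (lit j (K j)).1 = (lit j (K j)).2) {l : Fin n × Bool}
    (hocc : (Finset.univ.filter fun p : Fin m × Fin 3 => lit p.1 p.2 = l).card = 2)
    (hl : T l.1 ≠ l.2) :
    (edgesAt (assignmentDCPS lit fC fB T K) (litVertex l)).ncard = r := by
  rw [assignmentDCPS, edgesAt_sdiff, edgesAt_removedEdges_litVertex lit T K hK hl, Set.sdiff_empty,
    ncard_edgesAt_permitted_litVertex lit fC fB hr hdist l hocc]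

lemma isDCPS_assignmentDCPS (hr : 2 ≤ r)
    (hdist : ∀ j : Fin m, Function.Injective fun k : Fin 3 => (lit j k).1)
    (hocc : ∀ l, (Finset.univ.filter fun p : Fin m × Fin 3 => lit p.1 p.2 = l).card = 2) :
    IsDCPS r (assignmentDCPS lit fC fB T K) := by
  have hperm : ∀ v, (edgesAt (permitted lit fC fB) v).ncard ≤ r →
      (edgesAt (assignmentDCPS lit fC fB T K) v).ncard ≤ r :=
    fun v => (Set.ncard_le_ncard (edgesAt_mono Set.sdiff_subset)).trans
  have hleaf : ∀ v e, edgesAt (E15 n m r lit) v ⊆ {e} →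
      (edgesAt (assignmentDCPS lit fC fB T K) v).ncard ≤ r := fun v e h =>
    (Set.ncard_le_ncard ((edgesAt_mono (Set.sdiff_subset.trans Set.sdiff_subset)).trans h)).trans
      (by rw [Set.ncard_singleton]; omega)
  intro v
  cases v with
  | cl j => exact (ncard_edgesAt_assignmentDCPS_cl lit fC fB T K hr hdist j).le
  | clChild j a => exact (ncard_edgesAt_assignmentDCPS_clChild lit fC fB T K j a).le
  | clLeaf j a t => exact hleaf _ _ (edgesAt_clLeaf_subset lit j a t)
  | x i =>
    exact hperm _ (ncard_edgesAt_permitted_litVertex lit fC fB hr hdist _ (hocc (i, true))).le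
  | nx i =>
    exact hperm _ (ncard_edgesAt_permitted_litVertex lit fC fB hr hdist _ (hocc (i, false))).le
  | x' i => exact hperm _ (ncard_edgesAt_permitted_primeVertex lit fC fB (i, true)).le
  | nx' i => exact hperm _ (ncard_edgesAt_permitted_primeVertex lit fC fB (i, false)).le
  | xPend i a => exact hleaf _ _ (edgesAt_pendant_subset lit (i, true) a)
  | nxPend i a => exact hleaf _ _ (edgesAt_pendant_subset lit (i, false) a)
  | vx i t => exact (ncard_edgesAt_assignmentDCPS_vx lit fC fB T K i t).le
  | bChild i t a => exact (ncard_edgesAt_assignmentDCPS_bChild lit fC fB T K i t a).le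
  | bLeaf i t a u => exact hleaf _ _ (edgesAt_bLeaf_subset lit i t a u)

lemma not_isDCPS_insert_assignmentDCPS (hr : 2 ≤ r)
    (hdist : ∀ j : Fin m, Function.Injective fun k : Fin 3 => (lit j k).1)
    (hocc : ∀ l, (Finset.univ.filter fun p : Fin m × Fin 3 => lit p.1 p.2 = l).card = 2)
    (hK : ∀ j, T (lit j (K j)).1 = (lit j (K j)).2) {e : Sym2 (V15 n m r)}
    (he : e ∈ E15 n m r lit) (heS : e ∉ assignmentDCPS lit fC fB T K) :
    ¬ IsDCPS r (insert e (assignmentDCPS lit fC fB T K)) := by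
  have hlit : ∀ l : Fin n × Bool, e = s(litVertex l, primeVertex l) →
      ¬ IsDCPS r (insert e (assignmentDCPS lit fC fB T K)) := by
    rintro l rfl
    by_cases hl : T l.1 = l.2
    · exact not_isDCPS_insert (Sym2.mem_mk_right _ _) heS
        (ncard_edgesAt_assignmentDCPS_primeVertex lit fC fB T K hl).ge
    · exact not_isDCPS_insert (Sym2.mem_mk_left _ _) heS
        (ncard_edgesAt_assignmentDCPS_litVertex lit fC fB T K hr hdist hK (hocc l) hl).ge
  by_cases hF : e ∈ Forb15 n m r fC fB
  · rcases hF with ⟨j, a, rfl⟩ | ⟨i, rfl | rfl⟩ | ⟨i, t, a, rfl⟩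
    · exact not_isDCPS_insert (Sym2.mem_mk_left _ _) heS
        (ncard_edgesAt_assignmentDCPS_clChild lit fC fB T K j a).ge
    · exact hlit (i, true) rfl
    · exact hlit (i, false) rfl
    · exact not_isDCPS_insert (Sym2.mem_mk_left _ _) heS
        (ncard_edgesAt_assignmentDCPS_bChild lit fC fB T K i t a).ge
  · have hR : e ∈ removedEdges lit T K := by
      by_contra hR
      exact heS ⟨⟨he, hF⟩, hR⟩
    rcases hR with ⟨j, rfl⟩ | ⟨i, t, rfl⟩
    · exact not_isDCPS_insert (Sym2.mem_mk_right _ _) heS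
        (ncard_edgesAt_assignmentDCPS_cl lit fC fB T K hr hdist j).ge
    · exact not_isDCPS_insert (Sym2.mem_mk_right _ _) heS
        (ncard_edgesAt_assignmentDCPS_vx lit fC fB T K i t).ge

end Forward

section Backward

variable {lit fC fB} {S : Set (Sym2 (V15 n m r))}

lemma cl_clChild_mem (hSU : S ⊆ permitted lit fC fB) (hS : IsMaximalDCPS r (E15 n m r lit) S)
    (j : Fin m) (a : Fin (r - 2)) : s(cl j, clChild j a) ∈ S := by
  obtain ⟨v, hv, hfull⟩ := hS.exists_ncard_edgesAt_eq (e := s(clChild j a, clLeaf j a (fC j a)))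
    (.inr (.inl ⟨j, a, _, rfl⟩)) fun h => (hSU h).2 (.inl ⟨j, a, rfl⟩)
  rcases Sym2.mem_iff.1 hv with rfl | rfl
  · refine mem_of_ncard_edgesAt_le hSU (by rw [hfull, ncard_edgesAt_permitted_clChild]) ?_
    rw [edgesAt_permitted_clChild]
    exact ⟨.inl (), rfl⟩
  · rw [Set.subset_empty_iff.1 ((edgesAt_mono hSU).trans
      (edgesAt_permitted_clLeaf lit fC fB j a).subset), Set.ncard_empty] at hfull
    exact absurd hfull.symm (fC j a).pos.ne'

lemma vx_bChild_mem (hSU : S ⊆ permitted lit fC fB) (hS : IsMaximalDCPS r (E15 n m r lit) S)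
    (i : Fin n) (t : Fin r) (a : Fin (r - 1)) : s(vx i t, bChild i t a) ∈ S := by
  obtain ⟨v, hv, hfull⟩ := hS.exists_ncard_edgesAt_eq (e := s(bChild i t a, bLeaf i t a (fB i t a)))
    (.inr (.inr (.inr (.inr (.inr (.inr (.inl ⟨i, t, a, _, rfl⟩)))))))
    fun h => (hSU h).2 (.inr (.inr ⟨i, t, a, rfl⟩))
  rcases Sym2.mem_iff.1 hv with rfl | rfl
  · refine mem_of_ncard_edgesAt_le hSU (by rw [hfull, ncard_edgesAt_permitted_bChild]) ?_
    rw [edgesAt_permitted_bChild]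
    exact ⟨.inl (), rfl⟩
  · rw [Set.subset_empty_iff.1 ((edgesAt_mono hSU).trans
      (edgesAt_permitted_bLeaf lit fC fB i t a).subset), Set.ncard_empty] at hfull
    exact absurd hfull.symm t.pos.ne'

lemma ncard_edgesAt_litVertex_eq_or_primeVertex_mem (hSU : S ⊆ permitted lit fC fB)
    (hS : IsMaximalDCPS r (E15 n m r lit) S) (l : Fin n × Bool) :
    (edgesAt S (litVertex l)).ncard = r ∨ ∀ t, s(primeVertex l, vx l.1 t) ∈ S := by
  have hE : s(litVertex l, primeVertex l) ∈ E15 n m r lit := by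
    obtain ⟨i, _ | _⟩ := l
    exacts [.inr (.inr (.inr (.inr (.inl ⟨i, .inr rfl⟩)))),
      .inr (.inr (.inr (.inr (.inl ⟨i, .inl rfl⟩))))]
  have hF : s(litVertex l, primeVertex l) ∈ Forb15 n m r fC fB := by
    obtain ⟨i, _ | _⟩ := l
    exacts [.inr (.inl ⟨i, .inr rfl⟩), .inr (.inl ⟨i, .inl rfl⟩)]
  obtain ⟨v, hv, hfull⟩ := hS.exists_ncard_edgesAt_eq hE fun h => (hSU h).2 hF
  rcases Sym2.mem_iff.1 hv with rfl | rfl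
  · exact .inl hfull
  · refine .inr fun t => mem_of_ncard_edgesAt_le hSU
      (by rw [hfull, ncard_edgesAt_permitted_primeVertex]) ?_
    rw [edgesAt_permitted_primeVertex]
    exact ⟨t, rfl⟩

lemma exists_ncard_edgesAt_litVertex_eq (hr : 0 < r) (hSU : S ⊆ permitted lit fC fB)
    (hS : IsMaximalDCPS r (E15 n m r lit) S) (i : Fin n) :
    ∃ b, (edgesAt S (litVertex (i, b))).ncard = r := by
  by_contra! h
  have hprime b := (ncard_edgesAt_litVertex_eq_or_primeVertex_mem hSU hS (i, b)).resolve_left (h b)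
  let t : Fin r := ⟨0, hr⟩
  have hsub : edgesAt (permitted lit fC fB) (vx i t) ⊆ edgesAt S (vx i t) := by
    rw [edgesAt_permitted_vx]
    rintro _ ⟨b | a, rfl⟩
    exacts [⟨hprime b t, Sym2.mem_mk_right _ _⟩, ⟨vx_bChild_mem hSU hS i t a, Sym2.mem_mk_left _ _⟩]
  have := (Set.ncard_le_ncard hsub).trans (hS.1 _)
  rw [ncard_edgesAt_permitted_vx] at this
  omega

lemma exists_crossing_notMem (hr : 2 ≤ r)
    (hdist : ∀ j : Fin m, Function.Injective fun k : Fin 3 => (lit j k).1)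
    (hSU : S ⊆ permitted lit fC fB) (hS : IsMaximalDCPS r (E15 n m r lit) S) (j : Fin m) :
    ∃ k, s(litVertex (lit j k), cl j) ∉ S := by
  by_contra! h
  have hsub : edgesAt (permitted lit fC fB) (cl j) ⊆ edgesAt S (cl j) := by
    rw [edgesAt_permitted_cl]
    rintro _ ⟨a | k, rfl⟩
    exacts [⟨cl_clChild_mem hSU hS j a, Sym2.mem_mk_left _ _⟩, ⟨h k, Sym2.mem_mk_right _ _⟩]
  have := (Set.ncard_le_ncard hsub).trans (hS.1 _)
  rw [ncard_edgesAt_permitted_cl lit fC fB hr hdist] at this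
  omega

lemma crossing_mem_of_ncard_edgesAt_eq (hr : 2 ≤ r)
    (hdist : ∀ j : Fin m, Function.Injective fun k : Fin 3 => (lit j k).1)
    (hSU : S ⊆ permitted lit fC fB) {l : Fin n × Bool}
    (hocc : (Finset.univ.filter fun p : Fin m × Fin 3 => lit p.1 p.2 = l).card = 2)
    (hfull : (edgesAt S (litVertex l)).ncard = r) {j : Fin m} {k : Fin 3} (hk : lit j k = l) :
    s(litVertex l, cl j) ∈ S := by
  refine mem_of_ncard_edgesAt_le hSU
    (by rw [hfull, ncard_edgesAt_permitted_litVertex lit fC fB hr hdist l hocc]) ?_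
  rw [edgesAt_permitted_litVertex]
  exact ⟨.inr ⟨(j, k), hk⟩, rfl⟩

lemma satisfiable_of_isMaximalDCPS (hr : 2 ≤ r)
    (hdist : ∀ j : Fin m, Function.Injective fun k : Fin 3 => (lit j k).1)
    (hocc : ∀ l, (Finset.univ.filter fun p : Fin m × Fin 3 => lit p.1 p.2 = l).card = 2)
    (hSU : S ⊆ permitted lit fC fB) (hS : IsMaximalDCPS r (E15 n m r lit) S) :
    ∃ T : Fin n → Bool, ∀ j, ∃ k, T (lit j k).1 = (lit j k).2 := by
  refine ⟨fun i => decide ((edgesAt S (litVertex (i, true))).ncard ≠ r), fun j => ?_⟩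
  obtain ⟨k, hk⟩ := exists_crossing_notMem hr hdist hSU hS j
  refine ⟨k, ?_⟩
  have hfree : (edgesAt S (litVertex (lit j k))).ncard ≠ r := fun hfull =>
    hk (crossing_mem_of_ncard_edgesAt_eq hr hdist hSU (hocc _) hfull rfl)
  generalize lit j k = l at hfree
  obtain ⟨i, _ | _⟩ := l
  · obtain ⟨_ | _, hb⟩ := exists_ncard_edgesAt_litVertex_eq (by omega) hSU hS i
    · exact absurd hb hfree
    · simpa using hb
  · simpa using hfree

end Backward

end V15

/-- a (3,B2)-SAT instance is satisfiable iff the constructed graph has a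
maximal r-DCPS set consisting of permitted edges only. -/
theorem stmt_15 (r n m : ℕ) (hr : 2 ≤ r) (lit : Fin m → Fin 3 → Fin n × Bool)
    (hdist : ∀ j : Fin m, Function.Injective fun k : Fin 3 => (lit j k).1)
    (hpos : ∀ v : Fin n,
      (Finset.univ.filter fun p : Fin m × Fin 3 => lit p.1 p.2 = (v, true)).card = 2)
    (hneg : ∀ v : Fin n,
      (Finset.univ.filter fun p : Fin m × Fin 3 => lit p.1 p.2 = (v, false)).card = 2)
    (fC : Fin m → Fin (r - 2) → Fin r)
    (fB : Fin n → Fin r → Fin (r - 1) → Fin r) :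
    (∃ T : Fin n → Bool, ∀ j : Fin m, ∃ k : Fin 3, T (lit j k).1 = (lit j k).2) ↔
      (∃ S : Set (Sym2 (V15 n m r)),
        S ⊆ E15 n m r lit \ Forb15 n m r fC fB ∧
        (∀ v : V15 n m r, ({e ∈ S | v ∈ e}).ncard ≤ r) ∧
        ∀ e ∈ E15 n m r lit \ S,
          ¬ ∀ v : V15 n m r, ({f ∈ insert e S | v ∈ f}).ncard ≤ r) := by
  have hocc : ∀ l, (Finset.univ.filter fun p : Fin m × Fin 3 => lit p.1 p.2 = l).card = 2
    | (i, true) => hpos i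
    | (i, false) => hneg i
  constructor
  · rintro ⟨T, hT⟩
    choose K hK using hT
    exact ⟨V15.assignmentDCPS lit fC fB T K, Set.sdiff_subset,
      V15.isDCPS_assignmentDCPS lit fC fB T K hr hdist hocc, fun e ⟨he, heS⟩ =>
        V15.not_isDCPS_insert_assignmentDCPS lit fC fB T K hr hdist hocc hK he heS⟩
  · rintro ⟨S, hSU, hS, hmax⟩
    exact V15.satisfiable_of_isMaximalDCPS hr hdist hocc hSU ⟨hS, hmax⟩
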